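/- arXiv:math-ph/0509027 — 7 statements merged into one kernel-verified Lean document; each statement's English description precedes it below -/
import Mathlib

section
/- If S is a real 2n×2n symplectic matrix with n×n blocks A, B, C, D (i.e. S = [[A,B],[C,D]] preserves the standard symplectic form), then the complex matrix A + iB is invertible. -/
open Matrix Complex
open scoped ComplexOrder

theorem stmt_0 (n : ℕ) (A B C D : Matrix (Fin n) (Fin n) ℝ)
    (hS : (Matrix.fromBlocks A B C D)ᵀ * (Matrix.fromBlocks 0 1 (-1) 0) *
      (Matrix.fromBlocks A B C D) = (Matrix.fromBlocks 0 1 (-1) 0 :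
        Matrix (Fin n ⊕ Fin n) (Fin n ⊕ Fin n) ℝ)) :
    IsUnit (A.map (Complex.ofReal) + Complex.I • B.map (Complex.ofReal)) := by
  classical
  -- extract the block equations over ℝ
  rw [fromBlocks_transpose, fromBlocks_multiply, fromBlocks_multiply] at hS
  simp only [Matrix.mul_zero, Matrix.mul_one, Matrix.mul_neg,
    Matrix.zero_mul, Matrix.one_mul, Matrix.neg_mul, zero_add, add_zero,
    Matrix.fromBlocks_inj] at hS
  obtain ⟨h1, h2, h3, h4⟩ := hS
  -- complexify via the ring hom matrix map
  set φ : Matrix (Fin n) (Fin n) ℝ →+* Matrix (Fin n) (Fin n) ℂ :=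
    (Complex.ofRealHom : ℝ →+* ℂ).mapMatrix with hφ
  have hφdef : ∀ X : Matrix (Fin n) (Fin n) ℝ, φ X = X.map Complex.ofReal := fun _ => rfl
  set A' := A.map Complex.ofReal with hA'
  set B' := B.map Complex.ofReal with hB'
  set C' := C.map Complex.ofReal with hC'
  set D' := D.map Complex.ofReal with hD'
  have htr : ∀ X : Matrix (Fin n) (Fin n) ℝ, φ Xᵀ = (φ X)ᵀ := fun X => by
    ext i j; rfl
  have e1 : -(C'ᵀ * A') + A'ᵀ * C' = 0 := by
    have := congrArg φ h1
    rw [_root_.map_add, map_neg, _root_.map_mul, _root_.map_mul, htr, htr, _root_.map_zero] at this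
    exact this
  have e2 : -(C'ᵀ * B') + A'ᵀ * D' = 1 := by
    have := congrArg φ h2
    rw [_root_.map_add, map_neg, _root_.map_mul, _root_.map_mul, htr, htr, _root_.map_one] at this
    exact this
  have e3 : -(D'ᵀ * A') + B'ᵀ * C' = -1 := by
    have := congrArg φ h3
    rw [_root_.map_add, map_neg, _root_.map_mul, _root_.map_mul, htr, htr, map_neg,
      _root_.map_one] at this
    exact this
  have e4 : -(D'ᵀ * B') + B'ᵀ * D' = 0 := by
    have := congrArg φ h4
    rw [_root_.map_add, map_neg, _root_.map_mul, _root_.map_mul, htr, htr, _root_.map_zero] at this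
    exact this
  -- rearranged forms
  have g1 : A'ᵀ * C' = C'ᵀ * A' := by linear_combination (norm := abel) e1
  have g2 : A'ᵀ * D' = 1 + C'ᵀ * B' := by linear_combination (norm := abel) e2
  have g3 : B'ᵀ * C' = -1 + D'ᵀ * A' := by linear_combination (norm := abel) e3
  have g4 : B'ᵀ * D' = D'ᵀ * B' := by linear_combination (norm := abel) e4
  set M := A' + Complex.I • B' with hMdef
  set N := C' + Complex.I • D' with hNdef
  have hM : Mᴴ = A'ᵀ - Complex.I • B'ᵀ := by
    ext i j
    simp [hMdef, hA', hB', Matrix.conjTranspose_apply, Matrix.add_apply, Matrix.smul_apply,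
      Matrix.sub_apply, Matrix.transpose_apply, Matrix.map_apply, smul_eq_mul,
      Complex.conj_ofReal, Complex.conj_I]
    ring
  have hN : Nᴴ = C'ᵀ - Complex.I • D'ᵀ := by
    ext i j
    simp [hNdef, hC', hD', Matrix.conjTranspose_apply, Matrix.add_apply, Matrix.smul_apply,
      Matrix.sub_apply, Matrix.transpose_apply, Matrix.map_apply, smul_eq_mul,
      Complex.conj_ofReal, Complex.conj_I]
    ring
  have key : Mᴴ * N - Nᴴ * M = (2 * Complex.I) • (1 : Matrix (Fin n) (Fin n) ℂ) := by
    rw [hM, hN, hMdef, hNdef]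
    simp only [mul_add, add_mul, sub_mul, mul_sub, smul_mul_assoc, mul_smul_comm, smul_smul,
      Complex.I_mul_I, g1, g2, g3, g4, smul_add, smul_sub, smul_neg, neg_smul, neg_one_smul,
      one_smul]
    module
  -- now show M is a unit
  rw [Matrix.isUnit_iff_isUnit_det, isUnit_iff_ne_zero]
  intro hdet
  obtain ⟨v, hv0, hv⟩ := Matrix.exists_mulVec_eq_zero_iff.mpr hdet
  have hterm1 : star v ⬝ᵥ (Mᴴ * N) *ᵥ v = 0 := by
    rw [dotProduct_mulVec, ← vecMul_vecMul, ← Matrix.star_mulVec, hv]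
    simp
  have hterm2 : star v ⬝ᵥ (Nᴴ * M) *ᵥ v = 0 := by
    rw [← mulVec_mulVec, hv]
    simp
  have h2i : (2 * Complex.I) * (star v ⬝ᵥ v) = 0 := by
    have := congrArg (fun X => star v ⬝ᵥ X *ᵥ v) key
    simp only [Matrix.sub_mulVec, dotProduct_sub, hterm1, hterm2, sub_zero, zero_sub,
      Matrix.smul_mulVec, Matrix.one_mulVec, dotProduct_smul, smul_eq_mul] at this
    linear_combination -this
  have hvv : star v ⬝ᵥ v = 0 := by
    rcases mul_eq_zero.mp h2i with h | h
    · exact absurd h (by simp [Complex.I_ne_zero])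
    · exact h
  exact hv0 (dotProduct_star_self_eq_zero.mp hvv)
end

section
/- If S = [[A,B],[C,D]] is a real 2n×2n symplectic matrix and Z is a complex symmetric n×n matrix with positive definite imaginary part, then A + BZ is invertible. -/
/-!
Suppose `(A + BZ) v = 0` and put `x = (v, Zv)`. Then `S x = (0, q)`, which is isotropic for the
Hermitian form `x ↦ x* J x`; since `S` is real, `Sᴴ J S = Sᵀ J S = J`, so `S` preserves this form
and `x* J x = v* (Z - Zᴴ) v = 2i · v* (Im Z) v` vanishes. As `Im Z` is positive definite, `v = 0`.
-/

open Matrix Complex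

namespace Matrix

variable {m n R : Type*} [Fintype m] [Fintype n]

section StarRing

variable [CommRing R] [StarRing R]

lemma star_mulVec_dotProduct_mulVec (M : Matrix m n R) (N : Matrix m m R) (x : n → R) :
    star (M *ᵥ x) ⬝ᵥ N *ᵥ (M *ᵥ x) = star x ⬝ᵥ (Mᴴ * N * M) *ᵥ x := by
  rw [star_mulVec, ← mulVec_mulVec, ← dotProduct_mulVec, mulVec_mulVec]

variable [DecidableEq n]

lemma star_sumElim_dotProduct_fromBlocks_mulVec_sumElim (u w : n → R) :
    star (Sum.elim u w) ⬝ᵥ fromBlocks 0 1 (-1) 0 *ᵥ Sum.elim u w =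
      star u ⬝ᵥ w - star w ⬝ᵥ u := by
  simp [fromBlocks_mulVec, Function.star_sumElim, sumElim_dotProduct_sumElim, neg_mulVec,
    sub_eq_add_neg]

lemma star_dotProduct_eq_of_add_mulVec_eq_zero {A B C D : Matrix n n R}
    (hS : (fromBlocks A B C D)ᴴ * fromBlocks 0 1 (-1) 0 * fromBlocks A B C D =
      fromBlocks 0 1 (-1) 0)
    {u w : n → R} (huw : A *ᵥ u + B *ᵥ w = 0) : star u ⬝ᵥ w = star w ⬝ᵥ u := by
  rw [← sub_eq_zero]
  calc star u ⬝ᵥ w - star w ⬝ᵥ u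
      = star (Sum.elim u w) ⬝ᵥ fromBlocks 0 1 (-1) 0 *ᵥ Sum.elim u w :=
        (star_sumElim_dotProduct_fromBlocks_mulVec_sumElim u w).symm
    _ = star (fromBlocks A B C D *ᵥ Sum.elim u w) ⬝ᵥ fromBlocks 0 1 (-1) 0 *ᵥ
          (fromBlocks A B C D *ᵥ Sum.elim u w) := by
        rw [star_mulVec_dotProduct_mulVec, hS]
    _ = 0 := by
        rw [fromBlocks_mulVec, Sum.elim_comp_inl, Sum.elim_comp_inr, huw,
          star_sumElim_dotProduct_fromBlocks_mulVec_sumElim]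
        simp

end StarRing

omit [Fintype m] [Fintype n] in
lemma conjTranspose_map_ofReal (M : Matrix m n ℝ) : (M.map ofReal)ᴴ = Mᵀ.map ofReal := by
  ext; simp

lemma conjTranspose_map_ofReal_mul_mul_of_transpose_mul_mul {M : Matrix n n ℝ}
    {N : Matrix n n ℝ} (h : Mᵀ * N * M = N) :
    (M.map ofReal)ᴴ * N.map ofReal * M.map ofReal = N.map ofReal := by
  have h' := congrArg (Matrix.map · ofRealHom) h
  rw [Matrix.map_mul, Matrix.map_mul] at h'
  rw [conjTranspose_map_ofReal]
  exact h'

omit [Fintype n] in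
lemma sub_conjTranspose_of_transpose_eq {Z : Matrix n n ℂ} (hZ : Zᵀ = Z) :
    Z - Zᴴ = (2 * I) • (Z.map im).map ofReal := by
  ext i j
  have hZij : Z j i = Z i j := congrFun (congrFun hZ i) j
  simp only [sub_apply, conjTranspose_apply, hZij, RCLike.star_def, sub_conj, smul_apply,
    map_apply, smul_eq_mul]
  push_cast
  ring

lemma re_star_dotProduct_map_ofReal_mulVec (Y : Matrix n n ℝ) (v : n → ℂ) :
    (star v ⬝ᵥ Y.map ofReal *ᵥ v).re =
      (re ∘ v) ⬝ᵥ Y *ᵥ (re ∘ v) + (im ∘ v) ⬝ᵥ Y *ᵥ (im ∘ v) := by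
  simp only [dotProduct, mulVec, Finset.mul_sum, re_sum, ← Finset.sum_add_distrib]
  refine Finset.sum_congr rfl fun i _ => Finset.sum_congr rfl fun j _ => ?_
  simp [mul_re]

lemma PosDef.re_star_dotProduct_map_ofReal_mulVec_pos {Y : Matrix n n ℝ} (hY : Y.PosDef)
    {v : n → ℂ} (hv : v ≠ 0) : 0 < (star v ⬝ᵥ Y.map ofReal *ᵥ v).re := by
  rw [re_star_dotProduct_map_ofReal_mulVec]
  have hre := hY.posSemidef.dotProduct_mulVec_nonneg (re ∘ v)
  have him := hY.posSemidef.dotProduct_mulVec_nonneg (im ∘ v)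
  obtain h | h : re ∘ v ≠ 0 ∨ im ∘ v ≠ 0 := by
    by_contra! h
    exact hv (funext fun i => Complex.ext (congrFun h.1 i) (congrFun h.2 i))
  all_goals
    have := hY.dotProduct_mulVec_pos h
    simp only [star_trivial] at *
    linarith

end Matrix

theorem stmt_1 (n : ℕ) (A B C D : Matrix (Fin n) (Fin n) ℝ)
    (hS : (Matrix.fromBlocks A B C D)ᵀ * (Matrix.fromBlocks 0 1 (-1) 0) *
      (Matrix.fromBlocks A B C D) = (Matrix.fromBlocks 0 1 (-1) 0 :
        Matrix (Fin n ⊕ Fin n) (Fin n ⊕ Fin n) ℝ))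
    (Z : Matrix (Fin n) (Fin n) ℂ) (hZsym : Zᵀ = Z)
    (hZpos : (Z.map Complex.im).PosDef) :
    IsUnit (A.map Complex.ofReal + B.map Complex.ofReal * Z) := by
  rw [isUnit_iff_isUnit_det, isUnit_iff_ne_zero, Ne, ← exists_mulVec_eq_zero_iff]
  rintro ⟨v, hv, hAv⟩
  have hvZv : star v ⬝ᵥ Z *ᵥ v = star (Z *ᵥ v) ⬝ᵥ v :=
    star_dotProduct_eq_of_add_mulVec_eq_zero
      (by simpa [fromBlocks_map, Matrix.map_neg] using
        conjTranspose_map_ofReal_mul_mul_of_transpose_mul_mul hS)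
      (by rwa [mulVec_mulVec, ← add_mulVec])
  have hIm : (2 * I) * (star v ⬝ᵥ (Z.map im).map ofReal *ᵥ v) = 0 := by
    rw [← smul_eq_mul, ← dotProduct_smul, ← smul_mulVec,
      ← sub_conjTranspose_of_transpose_eq hZsym, sub_mulVec, dotProduct_sub, hvZv, star_mulVec, ← dotProduct_mulVec, sub_self]
  refine (hZpos.re_star_dotProduct_map_ofReal_mulVec_pos hv).ne' ?_
  rw [(mul_eq_zero.mp hIm).resolve_left (by simp), zero_re]
end

section
/- Let F be a real 2n×2n symplectic matrix and M a complex symmetric 2n×2n matrix with positive definite imaginary part; set 𝓜 = JM. Then the matrix (I + 𝓜) + F(I − 𝓜) is invertible. -/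
/-!
Suppose `A v = 0` for `A = (1 + 𝓜) + F (1 - 𝓜)`, and put `p = (1 + 𝓜) v`, `q = (1 - 𝓜) v`, so that
`p = -F q`. Since `F` preserves the Hermitian form `h x = x* J x`, `h p = h q`. On the other hand
`h p - h q = 2 v* (J 𝓜 + 𝓜* J) v = 2 v* (M* - M) v = -4i v* (Im M) v`, using `J* = -J` and `J² = -1`,
and `M* = conj M` because `M` is symmetric. Positive definiteness of `Im M` then forces `v = 0`.
-/

open Matrix Complex

namespace Matrix

variable {ι : Type*} [Fintype ι]

section StarRing

variable {R : Type*} [CommRing R] [StarRing R]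

lemma star_mulVec_dotProduct_mulVec_mulVec {J F : Matrix ι ι R} (hF : Fᴴ * J * F = J)
    (x : ι → R) : star (F *ᵥ x) ⬝ᵥ J *ᵥ (F *ᵥ x) = star x ⬝ᵥ J *ᵥ x := by
  rw [star_mulVec, mulVec_mulVec, dotProduct_mulVec, vecMul_vecMul, ← mul_assoc, hF,
    ← dotProduct_mulVec]

lemma star_add_dotProduct_sub_star_sub_dotProduct (K N : Matrix ι ι R) (v : ι → R) :
    star (v + N *ᵥ v) ⬝ᵥ K *ᵥ (v + N *ᵥ v) - star (v - N *ᵥ v) ⬝ᵥ K *ᵥ (v - N *ᵥ v) =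
      2 * (star v ⬝ᵥ (K * N + Nᴴ * K) *ᵥ v) := by
  have hNK : star (N *ᵥ v) ⬝ᵥ K *ᵥ v = star v ⬝ᵥ (Nᴴ * K) *ᵥ v := by
    rw [star_mulVec, ← dotProduct_mulVec, mulVec_mulVec]
  simp only [star_add, star_sub, mulVec_add, mulVec_sub, dotProduct_add, dotProduct_sub,
    add_dotProduct, sub_dotProduct, hNK, add_mulVec, mulVec_mulVec]
  ring

variable [DecidableEq ι]

lemma star_dotProduct_conjTranspose_sub_mulVec_eq_zero {J F M : Matrix ι ι R} (hJ : Jᴴ = -J)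
    (hJJ : J * J = -1) (hF : Fᴴ * J * F = J) {v : ι → R}
    (hv : ((1 + J * M) + F * (1 - J * M)) *ᵥ v = 0) :
    2 * (star v ⬝ᵥ (Mᴴ - M) *ᵥ v) = 0 := by
  have hpq : v + (J * M) *ᵥ v = -(F *ᵥ (v - (J * M) *ᵥ v)) := by
    rw [eq_neg_iff_add_eq_zero, ← hv]
    simp only [add_mulVec, sub_mulVec, one_mulVec, ← mulVec_mulVec, mulVec_sub]
  have hJM : J * (J * M) + (J * M)ᴴ * J = Mᴴ - M := by
    rw [← mul_assoc, hJJ, conjTranspose_mul, hJ, mul_assoc, neg_mul J, hJJ]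
    simp [sub_eq_neg_add]
  rw [← hJM, ← star_add_dotProduct_sub_star_sub_dotProduct, hpq, star_neg, mulVec_neg,
    neg_dotProduct, dotProduct_neg, neg_neg, star_mulVec_dotProduct_mulVec_mulVec hF, sub_self]

end StarRing

lemma re_star_dotProduct_map_ofReal_mulVec_s6 (P : Matrix ι ι ℝ) (x : ι → ℂ) :
    (star x ⬝ᵥ P.map ofReal *ᵥ x).re =
      (fun i ↦ (x i).re) ⬝ᵥ P *ᵥ (fun i ↦ (x i).re) +
        (fun i ↦ (x i).im) ⬝ᵥ P *ᵥ (fun i ↦ (x i).im) := by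
  simp only [dotProduct, mulVec, map_apply, Pi.star_apply, Finset.mul_sum, re_sum,
    ← Finset.sum_add_distrib]
  refine Finset.sum_congr rfl fun i _ ↦ Finset.sum_congr rfl fun j _ ↦ ?_
  simp only [mul_re, mul_im, star_def, conj_re, conj_im, ofReal_re, ofReal_im]
  ring

lemma PosDef.re_star_dotProduct_map_ofReal_mulVec_pos_s6 {P : Matrix ι ι ℝ} (hP : P.PosDef)
    {x : ι → ℂ} (hx : x ≠ 0) : 0 < (star x ⬝ᵥ P.map ofReal *ᵥ x).re := by
  rw [re_star_dotProduct_map_ofReal_mulVec_s6]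
  have key : ∀ y : ι → ℝ, 0 ≤ y ⬝ᵥ P *ᵥ y ∧ (y ≠ 0 → 0 < y ⬝ᵥ P *ᵥ y) := fun y ↦
    ⟨by simpa using hP.posSemidef.dotProduct_mulVec_nonneg y,
      fun hy ↦ by simpa using hP.dotProduct_mulVec_pos hy⟩
  by_cases hre : (fun i ↦ (x i).re) = 0
  · have him : (fun i ↦ (x i).im) ≠ 0 := fun him ↦
      hx (funext fun i ↦ Complex.ext (congrFun hre i) (congrFun him i))
    linarith [(key fun i ↦ (x i).re).1, (key _).2 him]
  · linarith [(key _).2 hre, (key fun i ↦ (x i).im).1]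

theorem isUnit_one_add_mul_add_mul_one_sub_mul [DecidableEq ι] {J F M : Matrix ι ι ℂ}
    (hJ : Jᴴ = -J) (hJJ : J * J = -1) (hF : Fᴴ * J * F = J) (hM : Mᵀ = M)
    (hMpos : (M.map im).PosDef) : IsUnit ((1 + J * M) + F * (1 - J * M)) := by
  rw [← mulVec_injective_iff_isUnit, ← coe_mulVecLin, injective_iff_map_eq_zero]
  intro v hv
  by_contra hv0
  have h := star_dotProduct_conjTranspose_sub_mulVec_eq_zero hJ hJJ hF hv
  have hIm : Mᴴ - M = (-(2 * I)) • (M.map im).map ofReal := by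
    ext i j
    rw [conjTranspose, hM]
    apply Complex.ext <;> simp
    ring
  rw [hIm, smul_mulVec, dotProduct_smul, smul_eq_mul] at h
  have hzero : star v ⬝ᵥ (M.map im).map ofReal *ᵥ v = 0 := by simpa [I_ne_zero] using h
  have hpos := hMpos.re_star_dotProduct_map_ofReal_mulVec_pos_s6 hv0
  rw [hzero, zero_re] at hpos
  exact hpos.false

end Matrix

theorem stmt_6 (n : ℕ) (F : Matrix (Fin n ⊕ Fin n) (Fin n ⊕ Fin n) ℝ)
    (hF : Fᵀ * (Matrix.fromBlocks 0 1 (-1) 0) * F = (Matrix.fromBlocks 0 1 (-1) 0 :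
      Matrix (Fin n ⊕ Fin n) (Fin n ⊕ Fin n) ℝ))
    (M : Matrix (Fin n ⊕ Fin n) (Fin n ⊕ Fin n) ℂ) (hMsym : Mᵀ = M)
    (hMpos : (M.map Complex.im).PosDef) :
    IsUnit ((1 + (Matrix.fromBlocks 0 1 (-1) 0 :
        Matrix (Fin n ⊕ Fin n) (Fin n ⊕ Fin n) ℂ) * M) +
      F.map Complex.ofReal * (1 - (Matrix.fromBlocks 0 1 (-1) 0 :
        Matrix (Fin n ⊕ Fin n) (Fin n ⊕ Fin n) ℂ) * M)) := by
  set J : Matrix (Fin n ⊕ Fin n) (Fin n ⊕ Fin n) ℂ := fromBlocks 0 1 (-1) 0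
  have hJ : Jᴴ = -J := by simp [J, fromBlocks_conjTranspose, fromBlocks_neg]
  have hJJ : J * J = -1 := by simp [J, fromBlocks_multiply, ← fromBlocks_one, fromBlocks_neg]
  have hFJ : (F.map ofRealHom)ᴴ * J * F.map ofRealHom = J := by
    have hJ_map : J = (fromBlocks 0 1 (-1) 0 : Matrix (Fin n ⊕ Fin n) (Fin n ⊕ Fin n) ℝ).map
        ofRealHom := by
      simp [J, fromBlocks_map, Matrix.map_neg _ (map_neg ofRealHom)]
    rw [← conjTranspose_map (ofRealHom : ℝ → ℂ) fun _ ↦ (conj_ofReal _).symm, hJ_map,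
      ← Matrix.map_mul, ← Matrix.map_mul, conjTranspose_eq_transpose_of_trivial, hF]
  exact isUnit_one_add_mul_add_mul_one_sub_mul hJ hJJ hFJ hMsym hMpos
end

section
/- Suppose 𝓝 is a complex symplectic 2n×2n matrix without eigenvalue −1 and 𝓜 = (I − 𝓝)(I + 𝓝)^{-1}. Then I − 𝓝̄^{-1}𝓝 = 2(I − 𝓜̄)^{-1}(𝓜 − 𝓜̄)(I + 𝓜)^{-1}. -/
/-!
With `P = (I + 𝓝)⁻¹` the Cayley transform is `𝓜 = 2P - I`, and likewise `𝓜̄ = 2P̄ - I`. Hence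
`(I + 𝓜)⁻¹ = (I + 𝓝)/2`, `(I - 𝓜̄)⁻¹ = (I + 𝓝̄⁻¹)/2` and `𝓜 - 𝓜̄ = 2(P - P̄)`, and the right-hand
side collapses to `(I + 𝓝̄⁻¹)(P - P̄)(I + 𝓝) = (I + 𝓝̄⁻¹) - 𝓝̄⁻¹(I + 𝓝) = I - 𝓝̄⁻¹𝓝`.
-/

open Matrix Complex

namespace Matrix

variable {ι K : Type*} [Fintype ι] [DecidableEq ι]

theorem map_nonsing_inv {R S : Type*} [CommRing R] [CommRing S] (f : R →+* S)
    {A : Matrix ι ι R} (hA : IsUnit A.det) : A⁻¹.map f = (A.map f)⁻¹ := by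
  refine (inv_eq_left_inv ?_).symm
  rw [← Matrix.map_mul, nonsing_inv_mul A hA, Matrix.map_one _ f.map_zero f.map_one]

section Cayley

variable [Field K]

noncomputable def cayley (A : Matrix ι ι K) : Matrix ι ι K := (1 - A) * (1 + A)⁻¹

theorem map_cayley {L : Type*} [Field L] (f : K →+* L) {A : Matrix ι ι K}
    (hA : IsUnit (1 + A)) : (cayley A).map f = cayley (A.map f) := by
  rw [cayley, cayley, Matrix.map_mul,
    map_nonsing_inv f ((isUnit_iff_isUnit_det _).mp hA)]
  simp [Matrix.map_sub, Matrix.map_add, Matrix.map_one _ f.map_zero f.map_one]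

variable {A B : Matrix ι ι K}

theorem cayley_eq (hA : IsUnit (1 + A)) : cayley A = (2 : K) • (1 + A)⁻¹ - 1 := by
  calc cayley A = (2 : K) • (1 + A)⁻¹ - (1 + A) * (1 + A)⁻¹ := by
        rw [cayley, two_smul]; noncomm_ring
    _ = _ := by rw [mul_nonsing_inv _ ((isUnit_iff_isUnit_det _).mp hA)]

theorem inv_one_add_cayley (h2 : (2 : K) ≠ 0) (hA : IsUnit (1 + A)) :
    (1 + cayley A)⁻¹ = (2 : K)⁻¹ • (1 + A) := by
  refine inv_eq_left_inv ?_
  rw [cayley_eq hA, add_sub_cancel, smul_mul_smul_comm, inv_mul_cancel₀ h2, one_smul,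
    mul_nonsing_inv _ ((isUnit_iff_isUnit_det _).mp hA)]

theorem one_add_inv_mul_inv_one_add (hB : IsUnit (1 + B)) (hBu : IsUnit B) :
    (1 + B⁻¹) * (1 + B)⁻¹ = B⁻¹ := by
  have hBinv : B⁻¹ * B = 1 := nonsing_inv_mul _ ((isUnit_iff_isUnit_det _).mp hBu)
  rw [show 1 + B⁻¹ = B⁻¹ * (1 + B) by rw [mul_add, mul_one, hBinv, add_comm], mul_assoc,
    mul_nonsing_inv _ ((isUnit_iff_isUnit_det _).mp hB), mul_one]

theorem inv_one_sub_cayley (h2 : (2 : K) ≠ 0) (hB : IsUnit (1 + B)) (hBu : IsUnit B) :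
    (1 - cayley B)⁻¹ = (2 : K)⁻¹ • (1 + B⁻¹) := by
  refine inv_eq_left_inv ?_
  have hsub : 1 - cayley B = (2 : K) • (1 - (1 + B)⁻¹) := by
    rw [cayley_eq hB]; module
  rw [hsub, smul_mul_smul_comm, inv_mul_cancel₀ h2, one_smul, mul_sub, mul_one,
    one_add_inv_mul_inv_one_add hB hBu, add_sub_cancel_right]

theorem one_sub_inv_mul_eq_cayley (h2 : (2 : K) ≠ 0) (hA : IsUnit (1 + A))
    (hB : IsUnit (1 + B)) (hBu : IsUnit B) :
    1 - B⁻¹ * A =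
      (2 : K) • ((1 - cayley B)⁻¹ * (cayley A - cayley B) * (1 + cayley A)⁻¹) := by
  have hdiff : cayley A - cayley B = (2 : K) • ((1 + A)⁻¹ - (1 + B)⁻¹) := by
    rw [cayley_eq hA, cayley_eq hB]; module
  have hcore : (1 + B⁻¹) * ((1 + A)⁻¹ - (1 + B)⁻¹) * (1 + A) = 1 - B⁻¹ * A := by
    rw [mul_sub, sub_mul, mul_assoc, nonsing_inv_mul _ ((isUnit_iff_isUnit_det _).mp hA),
      mul_one, one_add_inv_mul_inv_one_add hB hBu]
    noncomm_ring
  rw [inv_one_sub_cayley h2 hB hBu, inv_one_add_cayley h2 hA, hdiff, smul_mul_smul_comm,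
    smul_mul_smul_comm, smul_smul, hcore, inv_mul_cancel₀ h2, one_mul, mul_inv_cancel₀ h2,
    one_smul]

end Cayley

end Matrix

theorem stmt_8_general (n : ℕ) (N : Matrix (Fin n ⊕ Fin n) (Fin n ⊕ Fin n) ℂ)
    (hsymp : Nᵀ * (Matrix.fromBlocks 0 1 (-1) 0) * N = (Matrix.fromBlocks 0 1 (-1) 0 :
      Matrix (Fin n ⊕ Fin n) (Fin n ⊕ Fin n) ℂ))
    (hN : IsUnit (1 + N))
    (M : Matrix (Fin n ⊕ Fin n) (Fin n ⊕ Fin n) ℂ)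
    (hM : M = (1 - N) * (1 + N)⁻¹) :
    1 - (N.map (starRingEnd ℂ))⁻¹ * N =
      (2 : ℂ) • ((1 - M.map (starRingEnd ℂ))⁻¹ *
        (M - M.map (starRingEnd ℂ)) * (1 + M)⁻¹) := by
  have hJ : fromBlocks 0 1 (-1) 0 = -J (Fin n) ℂ := by simp [J, fromBlocks_neg]
  rw [hJ, mul_neg, neg_mul, neg_inj, ← SymplecticGroup.mem_iff'] at hsymp
  have hconj_unit : IsUnit (N.map (starRingEnd ℂ)) := (isUnit_iff_isUnit_det _).mpr
    (SymplecticGroup.symplectic_det (SymplecticGroup.map_mem hsymp _))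
  have hconj_add : IsUnit (1 + N.map (starRingEnd ℂ)) := by
    simpa [Matrix.map_add] using hN.map (starRingEnd ℂ).mapMatrix
  subst hM
  rw [show (1 - N) * (1 + N)⁻¹ = cayley N from rfl, map_cayley _ hN]
  exact one_sub_inv_mul_eq_cayley two_ne_zero hN hconj_add hconj_unit

theorem stmt_8 (n : ℕ) (N : Matrix (Fin n ⊕ Fin n) (Fin n ⊕ Fin n) ℂ)
    (hsymp : Nᵀ * (Matrix.fromBlocks 0 1 (-1) 0) * N = (Matrix.fromBlocks 0 1 (-1) 0 :
      Matrix (Fin n ⊕ Fin n) (Fin n ⊕ Fin n) ℂ))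
    (hN : IsUnit (1 + N))
    (M : Matrix (Fin n ⊕ Fin n) (Fin n ⊕ Fin n) ℂ)
    (hM : M = (1 - N) * (1 + N)⁻¹)
    (hM1 : IsUnit (1 + M)) (hM2 : IsUnit (1 + M.map (starRingEnd ℂ))) :
    1 - (N.map (starRingEnd ℂ))⁻¹ * N =
      (2 : ℂ) • ((1 - M.map (starRingEnd ℂ))⁻¹ *
        (M - M.map (starRingEnd ℂ)) * (1 + M)⁻¹) :=
  stmt_8_general n N hsymp hN M hM
end

section
/- Let 𝓢_t be a continuous family of complex Hamiltonian 2n×2n matrices and F_t the solution of Ḟ_t = 𝓢_t F_t, F_0 = I. If 𝓜_0 is a complex matrix such that I + 𝓜_0 + F_t(I − 𝓜_0) is invertible for all t, then 𝓜_t := (I + 𝓜_0 − F_t(I − 𝓜_0))(I + 𝓜_0 + F_t(I − 𝓜_0))^{-1} solves the matrix Riccati equation 𝓜̇_t = ½(𝓜_t + I)𝓢_t(𝓜_t − I) with 𝓜_0 at t = 0. -/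
/-!
With `P = F_t (I - 𝓜₀)` and `B = I + 𝓜₀ + P` we have `Ṗ = 𝓢 P`, and `B B⁻¹ = I` gives
`𝓜 - I = -2 P B⁻¹`. The quotient rule then yields `𝓜̇ = -(𝓜 + I) 𝓢 P B⁻¹ = ½ (𝓜 + I) 𝓢 (𝓜 - I)`.
-/

open Matrix Complex

attribute [local instance] Matrix.normedAddCommGroup Matrix.normedSpace

/-- `𝓜_t = riccatiTransform 𝓜₀ F_t` (with `Ring.inverse` sending non-units to `0`). -/
noncomputable def riccatiTransform {R : Type*} [Ring R] (M₀ X : R) : R :=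
  (1 + M₀ - X * (1 - M₀)) * Ring.inverse (1 + M₀ + X * (1 - M₀))

theorem riccatiTransform_one {R : Type*} [Ring R] (M₀ : R) (h : IsUnit (2 : R)) :
    riccatiTransform M₀ 1 = M₀ := by
  have hnum : 1 + M₀ - 1 * (1 - M₀) = M₀ * 2 := by noncomm_ring
  have hden : 1 + M₀ + 1 * (1 - M₀) = 2 := by rw [one_mul, add_add_sub_cancel, one_add_one_eq_two]
  rw [riccatiTransform, hnum, hden, mul_assoc, Ring.mul_inverse_cancel _ h, mul_one]

section NormedAlgebra

variable {𝕜 R : Type*} [NontriviallyNormedField 𝕜] [NormedRing R] [NormedAlgebra 𝕜 R]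
  [HasSummableGeomSeries R]

theorem HasDerivAt.ringInverse {B : 𝕜 → R} {B' : R} {t : 𝕜} (hB : HasDerivAt B B' t)
    (hu : IsUnit (B t)) :
    HasDerivAt (fun s => Ring.inverse (B s))
      (-(Ring.inverse (B t) * B' * Ring.inverse (B t))) t := by
  have h := hasFDerivAt_ringInverse (𝕜 := 𝕜) hu.unit
  rw [hu.unit_spec] at h
  simpa [← Ring.inverse_unit, hu.unit_spec, Function.comp_def] using h.comp_hasDerivAt t hB

theorem HasDerivAt.riccatiTransform [NeZero (2 : 𝕜)] {F : 𝕜 → R} {S M₀ : R} {t : 𝕜}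
    (hF : HasDerivAt F (S * F t) t) (hu : IsUnit (1 + M₀ + F t * (1 - M₀))) :
    HasDerivAt (fun s => riccatiTransform M₀ (F s))
      ((2 : 𝕜)⁻¹ • ((riccatiTransform M₀ (F t) + 1) * S * (riccatiTransform M₀ (F t) - 1))) t := by
  have hP : HasDerivAt (fun s => F s * (1 - M₀)) (S * (F t * (1 - M₀))) t := by
    simpa [mul_assoc] using hF.mul_const (1 - M₀)
  have hB := Ring.mul_inverse_cancel _ hu
  unfold _root_.riccatiTransform
  convert (hP.const_sub (1 + M₀)).fun_mul ((hP.const_add (1 + M₀)).ringInverse hu) using 1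
  generalize F t * (1 - M₀) = P at hB ⊢
  generalize Ring.inverse (1 + M₀ + P) = Binv at hB ⊢
  have hsub : (1 + M₀ - P) * Binv - 1 = -(P * Binv) - P * Binv := by
    calc (1 + M₀ - P) * Binv - 1 = (1 + M₀ - P) * Binv - (1 + M₀ + P) * Binv := by rw [hB]
      _ = -(P * Binv) - P * Binv := by noncomm_ring
  rw [hsub, inv_smul_eq_iff₀ two_ne_zero, two_smul]
  noncomm_ring

end NormedAlgebra

theorem Matrix.hasDerivAt_riccatiTransform {ι : Type*} [Fintype ι] [DecidableEq ι]
    {F : ℝ → Matrix ι ι ℂ} {S M₀ : Matrix ι ι ℂ} {t : ℝ}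
    (hF : HasDerivAt F (S * F t) t) (hu : IsUnit (1 + M₀ + F t * (1 - M₀))) :
    HasDerivAt (fun s => riccatiTransform M₀ (F s))
      ((1 / 2 : ℂ) • ((riccatiTransform M₀ (F t) + 1) * S * (riccatiTransform M₀ (F t) - 1))) t := by
  have half (X : Matrix ι ι ℂ) : (1 / 2 : ℂ) • X = (2⁻¹ : ℝ) • X := by
    rw [← algebraMap_smul ℂ (2⁻¹ : ℝ) X]; norm_num
  rw [half]
  -- `HasDerivAt` only sees the topology, so we may use the submultiplicative `L∞`-operator norm.
  let _ : NormedRing (Matrix ι ι ℂ) := Matrix.linftyOpNormedRing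
  let _ : NormedAlgebra ℝ (Matrix ι ι ℂ) := Matrix.linftyOpNormedAlgebra
  have : HasSummableGeomSeries (Matrix ι ι ℂ) :=
    @instHasSummableGeomSeriesOfCompleteSpace _ _ (FiniteDimensional.complete ℝ _)
  exact hF.riccatiTransform hu

theorem stmt_11_general (n : ℕ) (S : ℝ → Matrix (Fin n ⊕ Fin n) (Fin n ⊕ Fin n) ℂ)
    (F : ℝ → Matrix (Fin n ⊕ Fin n) (Fin n ⊕ Fin n) ℂ)
    (hF : ∀ t, HasDerivAt F (S t * F t) t) (hF0 : F 0 = 1)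
    (M₀ : Matrix (Fin n ⊕ Fin n) (Fin n ⊕ Fin n) ℂ)
    (hinv : ∀ t, IsUnit (1 + M₀ + F t * (1 - M₀)))
    (M : ℝ → Matrix (Fin n ⊕ Fin n) (Fin n ⊕ Fin n) ℂ)
    (hM : ∀ t, M t = (1 + M₀ - F t * (1 - M₀)) * (1 + M₀ + F t * (1 - M₀))⁻¹) :
    M 0 = M₀ ∧
    ∀ t, HasDerivAt M ((1 / 2 : ℂ) • ((M t + 1) * S t * (M t - 1))) t := by
  have hM' : M = fun t => riccatiTransform M₀ (F t) := by
    ext1 t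
    rw [hM, Matrix.nonsing_inv_eq_ringInverse, riccatiTransform]
  have htwo : IsUnit (2 : Matrix (Fin n ⊕ Fin n) (Fin n ⊕ Fin n) ℂ) := by
    simpa [hF0, one_add_one_eq_two] using hinv 0
  subst hM'
  refine ⟨?_, fun t => Matrix.hasDerivAt_riccatiTransform (hF t) (hinv t)⟩
  simpa only [hF0] using riccatiTransform_one M₀ htwo

theorem stmt_11 (n : ℕ) (S : ℝ → Matrix (Fin n ⊕ Fin n) (Fin n ⊕ Fin n) ℂ)
    (hScont : Continuous S)
    (hHam : ∀ t, (S t)ᵀ * (Matrix.fromBlocks 0 1 (-1) 0) +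
      (Matrix.fromBlocks 0 1 (-1) 0 : Matrix (Fin n ⊕ Fin n) (Fin n ⊕ Fin n) ℂ) * S t = 0)
    (F : ℝ → Matrix (Fin n ⊕ Fin n) (Fin n ⊕ Fin n) ℂ)
    (hF : ∀ t, HasDerivAt F (S t * F t) t) (hF0 : F 0 = 1)
    (M₀ : Matrix (Fin n ⊕ Fin n) (Fin n ⊕ Fin n) ℂ)
    (hinv : ∀ t, IsUnit (1 + M₀ + F t * (1 - M₀)))
    (M : ℝ → Matrix (Fin n ⊕ Fin n) (Fin n ⊕ Fin n) ℂ)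
    (hM : ∀ t, M t = (1 + M₀ - F t * (1 - M₀)) * (1 + M₀ + F t * (1 - M₀))⁻¹) :
    M 0 = M₀ ∧
    ∀ t, HasDerivAt M ((1 / 2 : ℂ) • ((M t + 1) * S t * (M t - 1))) t :=
  stmt_11_general n S F hF hF0 M₀ hinv M hM
end

section
/- Let F be a real symplectic matrix with det(I+F) ≠ 0 and set K_F = (I+F)(I+F+iJ(I−F))^{-1}. Then Re(K_F) = K_F K_F* = (I + N²)^{-1} and Im(K_F) = −N(I+N²)^{-1}, where N = J(I−F)(I+F)^{-1}. -/
open Matrix Complex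

open scoped ComplexOrder

/-!
The symplectic relation `Fᵀ J F = J` makes the Cayley transform `N = J (1 - F) (1 + F)⁻¹`
symmetric, and factoring `1 + F` out on the right of the denominator gives `K_F = (1 + i N)⁻¹`.
Since `N` is real symmetric, `(1 + i N) (1 - i N) = (1 - i N) (1 + i N) = 1 + N²` is positive
definite, so `K_F = (1 - i N) (1 + N²)⁻¹`, whose real and imaginary parts can be read off, and
`K_F K_F* = ((1 - i N) (1 + i N))⁻¹ = (1 + N²)⁻¹`.
-/

namespace Matrix

variable {m R : Type*} [Fintype m] [DecidableEq m]

theorem _root_.RingHom.isUnit_det_mapMatrix {S : Type*} [CommRing R] [CommRing S] (f : R →+* S)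
    {A : Matrix m m R} (hA : IsUnit A.det) : IsUnit (f.mapMatrix A).det :=
  f.map_det A ▸ hA.map f

theorem _root_.RingHom.mapMatrix_nonsing_inv {S : Type*} [CommRing R] [CommRing S] (f : R →+* S)
    {A : Matrix m m R} (hA : IsUnit A.det) : f.mapMatrix A⁻¹ = (f.mapMatrix A)⁻¹ :=
  (inv_eq_right_inv <| by rw [← map_mul, mul_nonsing_inv _ hA, map_one]).symm

theorem transpose_cayley_eq_self [CommRing R] {J F : Matrix m m R} (hJ : Jᵀ = -J)
    (hF : Fᵀ * J * F = J) (hF1 : IsUnit (1 + F).det) :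
    (J * (1 - F) * (1 + F)⁻¹)ᵀ = J * (1 - F) * (1 + F)⁻¹ := by
  have key : (1 - F)ᵀ * (-J) * (1 + F) = (1 + F)ᵀ * (J * (1 - F)) := by
    rw [← sub_eq_zero]
    calc _ = (2 : ℤ) • (Fᵀ * J * F - J) := by
            simp only [transpose_sub, transpose_add, transpose_one]; noncomm_ring
      _ = 0 := by rw [hF, sub_self, smul_zero]
  have hF1T : IsUnit (1 + F)ᵀ.det := by rwa [det_transpose]
  rw [transpose_mul, transpose_mul, transpose_nonsing_inv, hJ,
    ← mul_nonsing_inv_cancel_right (A := 1 + F) ((1 - F)ᵀ * -J) hF1, key, ← mul_assoc,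
    ← mul_assoc, nonsing_inv_mul _ hF1T, one_mul, mul_assoc]

theorem IsHermitian.posDef_one_add_sq {𝕜 : Type*} [RCLike 𝕜] {N : Matrix m m 𝕜}
    (hN : N.IsHermitian) : (1 + N ^ 2).PosDef := by
  simpa [sq, hN.eq] using PosDef.one.add_posSemidef (posSemidef_conjTranspose_mul_self N)

theorem mul_inv_add_smul_mul_self [CommRing R] {A : Matrix m m R} (B : Matrix m m R) (c : R)
    (hA : IsUnit A.det) : A * (A + c • (B * A))⁻¹ = (1 + c • B)⁻¹ := by
  rw [show A + c • (B * A) = (1 + c • B) * A by rw [add_mul, one_mul, smul_mul_assoc],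
    mul_inv_rev, mul_nonsing_inv_cancel_left _ _ hA]

theorem one_add_I_smul_mul_one_sub_I_smul (M : Matrix m m ℂ) :
    (1 + I • M) * (1 - I • M) = 1 + M ^ 2 := by
  rw [mul_sub, mul_one, add_mul, one_mul, smul_mul_smul_comm, I_mul_I, neg_one_smul, sq]; abel

theorem one_sub_I_smul_mul_one_add_I_smul (M : Matrix m m ℂ) :
    (1 - I • M) * (1 + I • M) = 1 + M ^ 2 := by
  rw [mul_add, mul_one, sub_mul, one_mul, smul_mul_smul_comm, I_mul_I, neg_one_smul, sq]; abel

theorem inv_one_add_I_smul {M : Matrix m m ℂ} (hM : IsUnit (1 + M ^ 2).det) :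
    (1 + I • M)⁻¹ = (1 - I • M) * (1 + M ^ 2)⁻¹ :=
  inv_eq_right_inv <| by rw [← mul_assoc, one_add_I_smul_mul_one_sub_I_smul, mul_nonsing_inv _ hM]

theorem inv_one_add_I_smul_mul_conjTranspose {M : Matrix m m ℂ} (hM : M.IsHermitian) :
    (1 + I • M)⁻¹ * ((1 + I • M)⁻¹)ᴴ = (1 + M ^ 2)⁻¹ := by
  rw [conjTranspose_nonsing_inv, conjTranspose_add, conjTranspose_one, conjTranspose_smul, hM.eq,
    star_def, conj_I, neg_smul, ← sub_eq_add_neg, ← mul_inv_rev, one_sub_I_smul_mul_one_add_I_smul]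

theorem map_re_ofReal_sub_I_smul (X Y : Matrix m m ℝ) :
    (ofRealHom.mapMatrix X - I • ofRealHom.mapMatrix Y).map re = X := by
  ext; simp

theorem map_im_ofReal_sub_I_smul (X Y : Matrix m m ℝ) :
    (ofRealHom.mapMatrix X - I • ofRealHom.mapMatrix Y).map im = -Y := by
  ext; simp

end Matrix

theorem stmt_14 (n : ℕ) (F : Matrix (Fin n ⊕ Fin n) (Fin n ⊕ Fin n) ℝ)
    (hF : Fᵀ * (Matrix.fromBlocks 0 1 (-1) 0) * F = (Matrix.fromBlocks 0 1 (-1) 0 :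
      Matrix (Fin n ⊕ Fin n) (Fin n ⊕ Fin n) ℝ))
    (hdet : (1 + F).det ≠ 0)
    (N : Matrix (Fin n ⊕ Fin n) (Fin n ⊕ Fin n) ℝ)
    (hN : N = (Matrix.fromBlocks 0 1 (-1) 0) * (1 - F) * (1 + F)⁻¹)
    (KF : Matrix (Fin n ⊕ Fin n) (Fin n ⊕ Fin n) ℂ)
    (hK : KF = (1 + F.map Complex.ofReal) *
      (1 + F.map Complex.ofReal + Complex.I •
        ((Matrix.fromBlocks 0 1 (-1) 0 : Matrix (Fin n ⊕ Fin n) (Fin n ⊕ Fin n) ℂ) *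
          (1 - F.map Complex.ofReal)))⁻¹) :
    KF.map Complex.re = (1 + N ^ 2)⁻¹ ∧
    KF * KFᴴ = ((1 + N ^ 2)⁻¹).map Complex.ofReal ∧
    KF.map Complex.im = -(N * (1 + N ^ 2)⁻¹) := by
  set J : Matrix (Fin n ⊕ Fin n) (Fin n ⊕ Fin n) ℝ := fromBlocks 0 1 (-1) 0
  set φ : Matrix (Fin n ⊕ Fin n) (Fin n ⊕ Fin n) ℝ →+* Matrix (Fin n ⊕ Fin n) (Fin n ⊕ Fin n) ℂ :=
    ofRealHom.mapMatrix
  have hF1 : IsUnit (1 + F).det := hdet.isUnit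
  have hNH : N.IsHermitian := by
    rw [IsHermitian, conjTranspose_eq_transpose_of_trivial, hN]
    exact transpose_cayley_eq_self (by simp [J, fromBlocks_transpose, fromBlocks_neg]) hF hF1
  have hB : IsUnit (1 + N ^ 2).det := hNH.posDef_one_add_sq.det_pos.ne'.isUnit
  have hKF : KF = (1 + I • φ N)⁻¹ := by
    have hJ : φ J = fromBlocks 0 1 (-1) 0 := by simp [φ, J, fromBlocks_map, Matrix.map_neg]
    have hNA : φ N * φ (1 + F) = φ J * (1 - φ F) := by
      rw [← map_mul, hN, nonsing_inv_mul_cancel_right _ _ hF1, map_mul, map_sub, map_one]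
    calc KF = φ (1 + F) * (φ (1 + F) + I • (φ N * φ (1 + F)))⁻¹ := by
          rw [hK, hNA, hJ, map_add, map_one]; rfl
      _ = (1 + I • φ N)⁻¹ := mul_inv_add_smul_mul_self _ _ (ofRealHom.isUnit_det_mapMatrix hF1)
  have hBc : 1 + φ N ^ 2 = φ (1 + N ^ 2) := by rw [map_add, map_one, map_pow]
  have hinv : (1 + φ N ^ 2)⁻¹ = φ (1 + N ^ 2)⁻¹ := by
    rw [ofRealHom.mapMatrix_nonsing_inv hB, hBc]
  have hKF' : KF = φ (1 + N ^ 2)⁻¹ - I • φ (N * (1 + N ^ 2)⁻¹) := by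
    rw [hKF, inv_one_add_I_smul (hBc ▸ ofRealHom.isUnit_det_mapMatrix hB), sub_mul, one_mul,
      smul_mul_assoc, hinv, map_mul]
  have hNc : (φ N).IsHermitian := hNH.map ofReal fun _ => by simp
  refine ⟨?_, ?_, ?_⟩
  · rw [hKF', map_re_ofReal_sub_I_smul]
  · rw [hKF, inv_one_add_I_smul_mul_conjTranspose hNc, hinv]
    rfl
  · rw [hKF', map_im_ofReal_sub_I_smul]
end

section
/- Let F be a real symplectic matrix with det(I+F) ≠ 0, and let T_F = ((I+iJ)F^{-1} + I − iJ)^{-1}. Then T_F T_F* = (2(F^{-T}F^{-1} + I))^{-1}. -/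
/-! Put `S = i • K` with `K = fromBlocks 0 1 (-1) 0`. Then `S` is Hermitian with `S * S = 1`, so
`(1 + S) / 2` and `(1 - S) / 2` are complementary orthogonal projections, and `G = F⁻¹` satisfies
`Gᴴ * S * G = S`. Expanding, `A = (1 + S) * G + 1 - S` has `Aᴴ * A = 2 * (Gᴴ * G + 1)`: the cross
terms vanish because `(1 + S) * (1 - S) = 0`, and `Gᴴ * S * G` cancels against `S`. Since
`T = A⁻¹`, we get `T * Tᴴ = (Aᴴ * A)⁻¹`. -/

open Matrix Complex

theorem star_mul_self_of_symplectic_involution {R : Type*} [Ring R] [StarRing R] {S G : R}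
    (hS : IsSelfAdjoint S) (hS2 : S * S = 1) (hG : star G * S * G = S) :
    star ((1 + S) * G + 1 - S) * ((1 + S) * G + 1 - S) = 2 * (star G * G + 1) := by
  have hG' : star G * (S * G) = S := by rw [← mul_assoc, hG]
  have hS2' : ∀ X : R, S * (S * X) = X := fun X => by rw [← mul_assoc, hS2, one_mul]
  rw [two_mul]
  simp only [star_sub, star_add, star_mul, star_one, hS.star_eq, add_mul, mul_add, sub_mul,
    mul_sub, mul_one, one_mul, mul_assoc, hS2, hS2', hG']
  abel

namespace Matrix

theorem map_nonsing_inv_s16 {m K L : Type*} [Fintype m] [DecidableEq m] [Field K] [Field L]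
    (f : K →+* L) (A : Matrix m m K) : (A.map f)⁻¹ = A⁻¹.map f := by
  rw [inv_def, inv_def, ← RingHom.mapMatrix_apply, ← RingHom.mapMatrix_apply,
    ← RingHom.map_adjugate, ← RingHom.map_det]
  ext i j
  simp [Ring.inverse_eq_inv']

theorem nonsing_inv_mul_conjTranspose_nonsing_inv {m α : Type*} [Fintype m] [DecidableEq m]
    [CommRing α] [StarRing α] (A : Matrix m m α) : A⁻¹ * A⁻¹ᴴ = (Aᴴ * A)⁻¹ := by
  rw [conjTranspose_nonsing_inv, mul_inv_rev]

theorem conjTranspose_map_ofReal_s16 {m n : Type*} (A : Matrix m n ℝ) :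
    (A.map ofReal)ᴴ = (A.map ofReal)ᵀ := by
  ext i j
  simp

theorem fromBlocks_zero_one_neg_one_zero {l R : Type*} [DecidableEq l] [CommRing R] :
    (fromBlocks 0 1 (-1) 0 : Matrix (l ⊕ l) (l ⊕ l) R) = -J l R := by
  simp [J, fromBlocks_neg]

theorem isSelfAdjoint_I_smul_neg_J {l : Type*} [DecidableEq l] : IsSelfAdjoint (I • -J l ℂ) := by
  simp [IsSelfAdjoint, star_eq_conjTranspose, J, fromBlocks_conjTranspose, fromBlocks_smul,
    fromBlocks_neg]

theorem I_smul_neg_J_mul_self {l : Type*} [Fintype l] [DecidableEq l] :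
    (I • -J l ℂ) * (I • -J l ℂ) = 1 := by
  simp [J_squared, smul_smul]

end Matrix

namespace SymplecticGroup

variable {l R : Type*} [Fintype l] [DecidableEq l] [CommRing R]

theorem mem_iff_neg_J {A : Matrix (l ⊕ l) (l ⊕ l) R} :
    A ∈ symplecticGroup l R ↔ Aᵀ * (-J l R) * A = -J l R := by
  rw [mem_iff', Matrix.mul_neg, Matrix.neg_mul, neg_inj]

theorem nonsing_inv_mem {A : Matrix (l ⊕ l) (l ⊕ l) R} (hA : A ∈ symplecticGroup l R) :
    A⁻¹ ∈ symplecticGroup l R := by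
  simpa only [coe_inv'] using (⟨A, hA⟩⁻¹ : symplecticGroup l R).2

end SymplecticGroup

theorem stmt_16_general (n : ℕ) (F : Matrix (Fin n ⊕ Fin n) (Fin n ⊕ Fin n) ℝ)
    (hF : Fᵀ * (Matrix.fromBlocks 0 1 (-1) 0) * F = (Matrix.fromBlocks 0 1 (-1) 0 :
      Matrix (Fin n ⊕ Fin n) (Fin n ⊕ Fin n) ℝ))
    (T : Matrix (Fin n ⊕ Fin n) (Fin n ⊕ Fin n) ℂ)
    (hT : T = ((1 + Complex.I • (Matrix.fromBlocks 0 1 (-1) 0 :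
        Matrix (Fin n ⊕ Fin n) (Fin n ⊕ Fin n) ℂ)) * (F.map Complex.ofReal)⁻¹ +
      1 - Complex.I • (Matrix.fromBlocks 0 1 (-1) 0 :
        Matrix (Fin n ⊕ Fin n) (Fin n ⊕ Fin n) ℂ))⁻¹) :
    T * Tᴴ = (((2 : ℝ) • ((F⁻¹)ᵀ * F⁻¹ + 1))⁻¹).map Complex.ofReal := by
  rw [fromBlocks_zero_one_neg_one_zero] at hF hT
  have hinv : ∀ A : Matrix (Fin n ⊕ Fin n) (Fin n ⊕ Fin n) ℝ, (A.map ofReal)⁻¹ = A⁻¹.map ofReal :=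
    map_nonsing_inv_s16 ofRealHom
  set G := F⁻¹.map ofReal
  have hG : G ∈ symplecticGroup (Fin n) ℂ :=
    SymplecticGroup.map_mem
      (SymplecticGroup.nonsing_inv_mem (SymplecticGroup.mem_iff_neg_J.2 hF)) ofRealHom
  have hGS : star G * (I • -J (Fin n) ℂ) * G = I • -J (Fin n) ℂ := by
    rw [star_eq_conjTranspose, conjTranspose_map_ofReal_s16, mul_smul_comm, smul_mul_assoc,
      SymplecticGroup.mem_iff_neg_J.1 hG]
  have hRHS : ((2 : ℝ) • ((F⁻¹)ᵀ * F⁻¹ + 1)).map ofReal = 2 * (star G * G + 1) := by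
    rw [star_eq_conjTranspose, conjTranspose_map_ofReal_s16, ← transpose_map]
    change ofRealHom.mapMatrix (2 • (F⁻¹ᵀ * F⁻¹ + 1)) =
      2 * (ofRealHom.mapMatrix F⁻¹ᵀ * ofRealHom.mapMatrix F⁻¹ + 1)
    simp only [two_smul, two_mul, map_add, map_mul, map_one]
  rw [hT, hinv, nonsing_inv_mul_conjTranspose_nonsing_inv, ← star_eq_conjTranspose,
    star_mul_self_of_symplectic_involution isSelfAdjoint_I_smul_neg_J I_smul_neg_J_mul_self hGS,
    ← hRHS, hinv]

theorem stmt_16 (n : ℕ) (F : Matrix (Fin n ⊕ Fin n) (Fin n ⊕ Fin n) ℝ)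
    (hF : Fᵀ * (Matrix.fromBlocks 0 1 (-1) 0) * F = (Matrix.fromBlocks 0 1 (-1) 0 :
      Matrix (Fin n ⊕ Fin n) (Fin n ⊕ Fin n) ℝ))
    (hdet : (1 + F).det ≠ 0)
    (T : Matrix (Fin n ⊕ Fin n) (Fin n ⊕ Fin n) ℂ)
    (hT : T = ((1 + Complex.I • (Matrix.fromBlocks 0 1 (-1) 0 :
        Matrix (Fin n ⊕ Fin n) (Fin n ⊕ Fin n) ℂ)) * (F.map Complex.ofReal)⁻¹ +
      1 - Complex.I • (Matrix.fromBlocks 0 1 (-1) 0 :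
        Matrix (Fin n ⊕ Fin n) (Fin n ⊕ Fin n) ℂ))⁻¹) :
    T * Tᴴ = (((2 : ℝ) • ((F⁻¹)ᵀ * F⁻¹ + 1))⁻¹).map Complex.ofReal :=
  stmt_16_general n F hF T hT
end
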